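/- arXiv:2605.18069 — 5 statements merged into one kernel-verified Lean document; each statement's English description precedes it below -/
import Mathlib

section
/- Let $(A_i)_{i=0}^{N-1}$, $(B_i)_{i=0}^{N-1}$, $(C_i)_{i=0}^{N-1}$ be sequences of real numbers with $B_i \geq 0$ and $C_i \geq 0$ for all $i$. If $x_0, x_1, \dots, x_N \in [0,\infty)$ satisfy $x_{i+1}^2 \leq (e^{A_i} x_i + B_i)^2 + C_i^2$ for all $i = 0, \dots, N-1$, then for every $k = 0, \dots, N-1$, setting $\bar A_i = A_0 + \cdots + A_i$, we have $x_{k+1} \leq e^{\bar A_k} x_0 + \sum_{i=0}^{k} e^{\bar A_k - \bar A_i} B_i + \sqrt{\sum_{i=0}^{k} e^{2(\bar A_k - \bar A_i)} C_i^2}$. -/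
open Finset

private lemma aux_sq (a b c x : ℝ) (ha : 0 ≤ a) (hb : 0 ≤ b) (hx : 0 ≤ x)
    (h : x ^ 2 ≤ (a + b) ^ 2 + c ^ 2) :
    x ≤ a + Real.sqrt (b ^ 2 + c ^ 2) := by
  have hbc : (0:ℝ) ≤ b ^ 2 + c ^ 2 := by positivity
  have hsq : Real.sqrt (b ^ 2 + c ^ 2) ^ 2 = b ^ 2 + c ^ 2 := Real.sq_sqrt hbc
  have hnn := Real.sqrt_nonneg (b ^ 2 + c ^ 2)
  have hs : b ≤ Real.sqrt (b ^ 2 + c ^ 2) := by nlinarith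
  nlinarith

theorem stmt0 (N : ℕ) (A B C x : ℕ → ℝ)
    (hB : ∀ i < N, 0 ≤ B i) (hC : ∀ i < N, 0 ≤ C i)
    (hx : ∀ i ≤ N, 0 ≤ x i)
    (hrec : ∀ i < N, x (i + 1) ^ 2 ≤ (Real.exp (A i) * x i + B i) ^ 2 + C i ^ 2) :
    ∀ k < N,
      x (k + 1) ≤ Real.exp (∑ j ∈ range (k + 1), A j) * x 0
        + ∑ i ∈ range (k + 1),
            Real.exp ((∑ j ∈ range (k + 1), A j) - ∑ j ∈ range (i + 1), A j) * B i
        + Real.sqrt (∑ i ∈ range (k + 1),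
            Real.exp (2 * ((∑ j ∈ range (k + 1), A j) - ∑ j ∈ range (i + 1), A j)) * C i ^ 2) := by
  intro k
  induction k with
  | zero =>
    intro hk
    have hx0 := hx 0 (Nat.zero_le N)
    have hB0 := hB 0 hk
    have h := hrec 0 hk
    have key := aux_sq (Real.exp (A 0) * x 0 + B 0) 0 (C 0) (x 1)
      (by positivity) le_rfl (hx 1 hk) (by simpa using h)
    simpa [sum_range_succ] using key
  | succ k IH =>
    intro hk
    have hk' : k < N := Nat.lt_of_succ_lt hk
    have hIH := IH hk'
    set Ak := ∑ j ∈ range (k + 1), A j with hAk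
    have hsum : ∑ j ∈ range (k + 2), A j = Ak + A (k + 1) := sum_range_succ A (k + 1)
    set Sk := ∑ i ∈ range (k + 1), Real.exp (Ak - ∑ j ∈ range (i + 1), A j) * B i with hSkdef
    set Tk := ∑ i ∈ range (k + 1),
        Real.exp (2 * (Ak - ∑ j ∈ range (i + 1), A j)) * C i ^ 2 with hTkdef
    have hTk : 0 ≤ Tk := sum_nonneg fun i _ => by positivity
    have hSk : 0 ≤ Sk := sum_nonneg fun i hi =>
      mul_nonneg (Real.exp_pos _).le (hB i ((mem_range.mp hi).trans hk))
    have hx0 := hx 0 (Nat.zero_le N)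
    have hxk1 := hx (k + 1) hk.le
    have hBk1 := hB (k + 1) hk
    have hrec' := hrec (k + 1) hk
    set M := Real.exp Ak * x 0 + Sk + Real.sqrt Tk with hMdef
    have hM0 : 0 ≤ M := add_nonneg (add_nonneg (mul_nonneg (Real.exp_pos _).le hx0) hSk)
      (Real.sqrt_nonneg _)
    have hmono : x (k + 2) ^ 2 ≤ (Real.exp (A (k + 1)) * M + B (k + 1)) ^ 2 + C (k + 1) ^ 2 := by
      have h1 : Real.exp (A (k + 1)) * x (k + 1) + B (k + 1)
          ≤ Real.exp (A (k + 1)) * M + B (k + 1) := by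
        have := mul_le_mul_of_nonneg_left hIH (Real.exp_pos (A (k + 1))).le
        linarith
      have h0 : 0 ≤ Real.exp (A (k + 1)) * x (k + 1) + B (k + 1) :=
        add_nonneg (mul_nonneg (Real.exp_pos _).le hxk1) hBk1
      calc x (k + 2) ^ 2 ≤ (Real.exp (A (k + 1)) * x (k + 1) + B (k + 1)) ^ 2 + C (k + 1) ^ 2 :=
            hrec'
        _ ≤ (Real.exp (A (k + 1)) * M + B (k + 1)) ^ 2 + C (k + 1) ^ 2 := by
            gcongr
    set a := Real.exp (A (k + 1)) * (Real.exp Ak * x 0 + Sk) + B (k + 1) with hadef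
    set b := Real.exp (A (k + 1)) * Real.sqrt Tk with hbdef
    have hab : Real.exp (A (k + 1)) * M + B (k + 1) = a + b := by
      rw [hMdef, hadef, hbdef]; ring
    have key := aux_sq a b (C (k + 1)) (x (k + 2))
      (add_nonneg (mul_nonneg (Real.exp_pos _).le
        (add_nonneg (mul_nonneg (Real.exp_pos _).le hx0) hSk)) hBk1)
      (mul_nonneg (Real.exp_pos _).le (Real.sqrt_nonneg _))
      (hx (k + 2) hk) (by rw [← hab]; exact hmono)
    -- rewrite the goal's pieces
    have hE : Real.exp (∑ j ∈ range (k + 2), A j) * x 0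
        = Real.exp (A (k + 1)) * (Real.exp Ak * x 0) := by
      rw [hsum, Real.exp_add]; ring
    have hS : ∑ i ∈ range (k + 2),
        Real.exp ((∑ j ∈ range (k + 2), A j) - ∑ j ∈ range (i + 1), A j) * B i
        = Real.exp (A (k + 1)) * Sk + B (k + 1) := by
      rw [sum_range_succ, hsum, sub_self, Real.exp_zero, one_mul, hSkdef, mul_sum]
      congr 1
      refine sum_congr rfl fun i hi => ?_
      rw [show Ak + A (k + 1) - ∑ j ∈ range (i + 1), A j
          = A (k + 1) + (Ak - ∑ j ∈ range (i + 1), A j) by ring, Real.exp_add, mul_assoc]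
    have hT : ∑ i ∈ range (k + 2),
        Real.exp (2 * ((∑ j ∈ range (k + 2), A j) - ∑ j ∈ range (i + 1), A j)) * C i ^ 2
        = b ^ 2 + C (k + 1) ^ 2 := by
      rw [sum_range_succ, hsum, sub_self, mul_zero, Real.exp_zero, one_mul]
      congr 1
      have hbsq : b ^ 2 = Real.exp (2 * A (k + 1)) * Tk := by
        rw [hbdef, mul_pow, Real.sq_sqrt hTk, ← Real.exp_nat_mul]
        norm_num [mul_comm]
      rw [hbsq, hTkdef, mul_sum]
      refine sum_congr rfl fun i hi => ?_
      rw [show 2 * (Ak + A (k + 1) - ∑ j ∈ range (i + 1), A j)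
          = 2 * A (k + 1) + 2 * (Ak - ∑ j ∈ range (i + 1), A j) by ring, Real.exp_add, mul_assoc]
    rw [hE, hS, hT]
    calc x (k + 2) ≤ a + Real.sqrt (b ^ 2 + C (k + 1) ^ 2) := key
      _ = Real.exp (A (k + 1)) * (Real.exp Ak * x 0)
          + (Real.exp (A (k + 1)) * Sk + B (k + 1))
          + Real.sqrt (b ^ 2 + C (k + 1) ^ 2) := by rw [hadef]; ring
end

section
/- Let $0 < t_0 < t_1 < \cdots < t_N \le 1$ with $t_{i+1} \leq 4 t_i$ for all $i$, and suppose there is $\eta > 0$ with $h_i := t_{i+1} - t_i \leq \eta \sqrt{t_{i+1}}$ for all $i = 0, \dots, N-1$ and $t_0 \geq 2^{-8}\eta^2$. Then for every $i \in \{0, 1, \dots, N-1\}$, $\sum_{j=i}^{N-1} \frac{h_j}{t_j} \leq 128 + \log \frac{1}{t_i}$. -/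
/-!
With `h_j = t_{j+1} - t_j`, split `h_j/t_j = h_j/t_{j+1} + h_j²/(t_j t_{j+1})`. The first term
is at most `log t_{j+1} - log t_j`; by the step condition `h_j ≤ η √t_{j+1}` and
`t_{j+1} ≤ 4 t_j`, the second is at most `3η (t_j^{-1/2} - t_{j+1}^{-1/2})`. Both bounds
telescope, `log t_N ≤ 0`, and `t_i ≥ t_0 ≥ 2⁻⁸ η²` gives `3η / √t_i ≤ 48`.
-/

open Real Finset

lemma le_of_forall_lt_le_add_one {t : ℕ → ℝ} {N : ℕ} (hmono : ∀ k < N, t k ≤ t (k + 1))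
    {i j : ℕ} (hij : i ≤ j) (hjN : j ≤ N) : t i ≤ t j := by
  rw [← sub_nonneg, ← sum_Ico_sub (f := t) hij]
  exact sum_nonneg fun k hk => sub_nonneg.2 (hmono k (by grind))

lemma sub_div_le_log_sub_log {a b : ℝ} (ha : 0 < a) (hb : 0 < b) :
    (b - a) / b ≤ log b - log a := by
  have h := one_sub_inv_le_log_of_pos (div_pos hb ha)
  rw [log_div hb.ne' ha.ne', inv_div] at h
  calc (b - a) / b = 1 - a / b := by field_simp
    _ ≤ log b - log a := h

lemma sq_sub_sq_sq_div_le {x y η : ℝ} (hx : 0 < x) (hxy : x ≤ y) (hy : y ≤ 2 * x)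
    (hstep : y ^ 2 - x ^ 2 ≤ η * y) :
    (y ^ 2 - x ^ 2) ^ 2 / (x ^ 2 * y ^ 2) ≤ 3 * η * (1 / x - 1 / y) := by
  have hy0 : 0 < y := hx.trans_le hxy
  have hsq : 0 ≤ y ^ 2 - x ^ 2 := by nlinarith
  have hηy : 0 ≤ η * y := hsq.trans hstep
  have hrhs : 3 * η * (1 / x - 1 / y) * (x ^ 2 * y ^ 2) = (y - x) * (3 * x) * (η * y) := by
    field_simp
  rw [div_le_iff₀ (by positivity), hrhs]
  calc (y ^ 2 - x ^ 2) ^ 2 = (y - x) * (y + x) * (y ^ 2 - x ^ 2) := by ring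
    _ ≤ (y - x) * (y + x) * (η * y) := by gcongr
    _ ≤ (y - x) * (3 * x) * (η * y) := by gcongr; linarith

lemma sub_div_le_log_sub_log_add {a b η : ℝ} (ha : 0 < a) (hab : a ≤ b) (hb : b ≤ 4 * a)
    (hstep : b - a ≤ η * √b) :
    (b - a) / a ≤ (log b - log a) + 3 * η * (1 / √a - 1 / √b) := by
  have hb0 : 0 < b := ha.trans_le hab
  have hsqrt : √b ≤ 2 * √a := by
    calc √b ≤ √(2 ^ 2 * a) := sqrt_le_sqrt (by linarith)
      _ = 2 * √a := by rw [sqrt_mul (by positivity), sqrt_sq zero_le_two]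
  have hsplit : (b - a) / a = (b - a) / b + (b - a) ^ 2 / (a * b) := by
    field_simp
    ring
  have hquad := sq_sub_sq_sq_div_le (sqrt_pos.2 ha) (sqrt_le_sqrt hab) hsqrt
    (by rwa [sq_sqrt ha.le, sq_sqrt hb0.le])
  rw [sq_sqrt ha.le, sq_sqrt hb0.le] at hquad
  rw [hsplit]
  linarith [sub_div_le_log_sub_log ha hb0]

lemma sum_Ico_sub_div_le {t : ℕ → ℝ} {η : ℝ} {i N : ℕ} (hiN : i ≤ N)
    (hpos : ∀ j ∈ Ico i N, 0 < t j) (hmono : ∀ j ∈ Ico i N, t j ≤ t (j + 1))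
    (hquad : ∀ j ∈ Ico i N, t (j + 1) ≤ 4 * t j)
    (hstep : ∀ j ∈ Ico i N, t (j + 1) - t j ≤ η * √(t (j + 1))) :
    ∑ j ∈ Ico i N, (t (j + 1) - t j) / t j
      ≤ (log (t N) - log (t i)) + 3 * η * (1 / √(t i) - 1 / √(t N)) := by
  calc ∑ j ∈ Ico i N, (t (j + 1) - t j) / t j
      ≤ ∑ j ∈ Ico i N, ((log (t (j + 1)) - log (t j))
          - 3 * η * (1 / √(t (j + 1)) - 1 / √(t j))) := by
        refine sum_le_sum fun j hj => ?_
        have h := sub_div_le_log_sub_log_add (hpos j hj) (hmono j hj) (hquad j hj) (hstep j hj)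
        linarith
    _ = (log (t N) - log (t i)) + 3 * η * (1 / √(t i) - 1 / √(t N)) := by
        rw [sum_sub_distrib, ← mul_sum, sum_Ico_sub (f := fun j => log (t j)) hiN,
          sum_Ico_sub (f := fun j => 1 / √(t j)) hiN]
        ring

theorem stmt7 (N : ℕ) (t : ℕ → ℝ) (η : ℝ) (hη : 0 < η)
    (ht0 : 0 < t 0) (hmono : ∀ i < N, t i < t (i + 1)) (htN : t N ≤ 1)
    (hquad : ∀ i < N, t (i + 1) ≤ 4 * t i)
    (hstep : ∀ i < N, t (i + 1) - t i ≤ η * Real.sqrt (t (i + 1)))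
    (ht0η : (2 : ℝ) ^ (-8 : ℤ) * η ^ 2 ≤ t 0) :
    ∀ i < N, ∑ j ∈ Finset.Ico i N, (t (j + 1) - t j) / t j ≤ 128 + Real.log (1 / t i) := by
  intro i hiN
  have hle : ∀ {j k}, j ≤ k → k ≤ N → t j ≤ t k :=
    le_of_forall_lt_le_add_one fun k hk => (hmono k hk).le
  have hpos : ∀ j ≤ N, 0 < t j := fun j hj => ht0.trans_le (hle j.zero_le hj)
  have hIco : ∀ j ∈ Ico i N, j < N := fun j hj => (mem_Ico.1 hj).2
  have hsum := sum_Ico_sub_div_le hiN.le (fun j hj => hpos j (hIco j hj).le)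
    (fun j hj => (hmono j (hIco j hj)).le) (fun j hj => hquad j (hIco j hj))
    (fun j hj => hstep j (hIco j hj))
  have hlogN : log (t N) ≤ 0 := log_nonpos (hpos N le_rfl).le htN
  have hsqrt : η / 16 ≤ √(t i) := by
    refine le_sqrt_of_sq_le (le_trans (le_of_eq ?_) (ht0η.trans (hle i.zero_le hiN.le)))
    norm_num
    ring
  have hinv : 3 * η * (1 / √(t i)) ≤ 48 := by
    rw [mul_one_div, div_le_iff₀ (by linarith)]
    linarith
  have hinvN : 0 ≤ 3 * η * (1 / √(t N)) := by positivity
  rw [one_div, log_inv]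
  linarith
end

section
/- Let $p \geq 2$ and let $X, Y$ be random vectors in $\mathbb{R}^d$ with finite $p$-th moments. Then $\|X+Y\|_p^2 + \|X-Y\|_p^2 \leq 2\|X\|_p^2 + 2(p-1)\|Y\|_p^2$, where $\|Z\|_p = (\mathbb{E}[|Z|^p])^{1/p}$ and $|\cdot|$ is the Euclidean norm. -/
/-!
Put `u = ‖x + y‖` and `v = ‖x - y‖`. By the parallelogram law and `|u - v| ≤ 2 ‖y‖`, the pointwise
bound `‖x + y‖ ^ p + ‖x - y‖ ^ p ≤ 2 (‖x‖² + (p - 1) ‖y‖²) ^ (p / 2)` follows from the scalar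
two-point inequality `(1 + t) ^ p + (1 - t) ^ p ≤ 2 (1 + (p - 1) t²) ^ (p / 2)` on `[0, 1]`
applied to `t = (u - v) / (u + v)`. Comparing derivatives twice reduces the scalar inequality for
`p` to the one for `p - 2`, and exponents in `[0, 2]` follow from concavity of `s ↦ s ^ (r / 2)`.
Integrating the pointwise bound, concavity of `s ↦ s ^ (2 / p)` and Minkowski's inequality in
`L^(p/2)` for `‖X‖²` and `(p - 1) ‖Y‖²` give the theorem.
-/

open Set

lemma rpow_add_rpow_le_two_mul_midpoint_rpow {s u v : ℝ} (hs₀ : 0 ≤ s) (hs₁ : s ≤ 1)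
    (hu : 0 ≤ u) (hv : 0 ≤ v) : u ^ s + v ^ s ≤ 2 * ((u + v) / 2) ^ s := by
  have h := (Real.concaveOn_rpow hs₀ hs₁).2 (mem_Ici.2 hu) (mem_Ici.2 hv)
    (by norm_num : (0 : ℝ) ≤ 1 / 2) (by norm_num : (0 : ℝ) ≤ 1 / 2) (by norm_num)
  rw [smul_eq_mul, smul_eq_mul, smul_eq_mul, smul_eq_mul,
    show 1 / 2 * u + 1 / 2 * v = (u + v) / 2 by ring] at h
  linarith

lemma le_on_Icc_of_hasDerivAt_le {f g f' g' : ℝ → ℝ} {a b : ℝ}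
    (hf : ∀ x, HasDerivAt f (f' x) x) (hg : ∀ x, HasDerivAt g (g' x) x)
    (ha : f a ≤ g a) (hderiv : ∀ x ∈ Ico a b, f' x ≤ g' x) : ∀ x ∈ Icc a b, f x ≤ g x :=
  fun _ hx => image_le_of_deriv_right_le_deriv_boundary
    (fun x _ => (hf x).continuousAt.continuousWithinAt) (fun x _ => (hf x).hasDerivWithinAt) ha
    (fun x _ => (hg x).continuousAt.continuousWithinAt) (fun x _ => (hg x).hasDerivWithinAt)
    hderiv hx

lemma sq_rpow_div_two {u : ℝ} (hu : 0 ≤ u) (p : ℝ) : (u ^ 2) ^ (p / 2) = u ^ p := by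
  rw [← Real.rpow_natCast, ← Real.rpow_mul hu]
  norm_num [mul_div_cancel₀]

lemma one_add_rpow_add_one_sub_rpow_le_of_le_two {r t : ℝ} (hr₀ : 0 ≤ r) (hr₂ : r ≤ 2)
    (ht : t ∈ Icc (-1) 1) : (1 + t) ^ r + (1 - t) ^ r ≤ 2 * (1 + t ^ 2) ^ (r / 2) := by
  have h := rpow_add_rpow_le_two_mul_midpoint_rpow (by linarith) (by linarith : r / 2 ≤ 1)
    (sq_nonneg (1 + t)) (sq_nonneg (1 - t))
  rwa [sq_rpow_div_two (by linarith [ht.1]), sq_rpow_div_two (by linarith [ht.2]),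
    show ((1 + t) ^ 2 + (1 - t) ^ 2) / 2 = 1 + t ^ 2 by ring] at h

lemma one_add_rpow_sub_one_sub_rpow_le {p : ℝ} (hp : 2 ≤ p)
    (h : ∀ t ∈ Icc (0 : ℝ) 1,
      (1 + t) ^ (p - 2) + (1 - t) ^ (p - 2) ≤ 2 * (1 + (p - 1) * t ^ 2) ^ ((p - 2) / 2)) :
    ∀ t ∈ Icc (0 : ℝ) 1, (1 + t) ^ (p - 1) - (1 - t) ^ (p - 1)
      ≤ 2 * (p - 1) * t * (1 + (p - 1) * t ^ 2) ^ ((p - 2) / 2) := by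
  have hp₁ : 1 ≤ p - 1 := by linarith
  refine le_on_Icc_of_hasDerivAt_le
    (f' := fun x => (p - 1) * ((1 + x) ^ (p - 2) + (1 - x) ^ (p - 2)))
    (g' := fun x => (p - 1) * (2 * (1 + (p - 1) * x ^ 2) ^ ((p - 2) / 2)
      + 2 * (p - 1) * (p - 2) * x ^ 2 * (1 + (p - 1) * x ^ 2) ^ ((p - 2) / 2 - 1)))
    (fun x => ?_) (fun x => ?_) (by simp) (fun x hx => ?_)
  · have hplus := ((hasDerivAt_id' x).const_add 1).rpow_const (p := p - 1) (Or.inr hp₁)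
    have hminus := ((hasDerivAt_id' x).const_sub 1).rpow_const (p := p - 1) (Or.inr hp₁)
    refine (hplus.sub hminus).congr_deriv ?_
    rw [show p - 1 - 1 = p - 2 by ring]
    ring
  · have hB : 1 + (p - 1) * x ^ 2 ≠ 0 := by positivity
    have := (((hasDerivAt_pow 2 x).const_mul (p - 1)).const_add 1).rpow_const
      (p := (p - 2) / 2) (Or.inl hB)
    refine (((hasDerivAt_id' x).const_mul (2 * (p - 1))).mul this).congr_deriv ?_
    ring
  · have hp₂ : 0 ≤ p - 2 := by linarith
    refine mul_le_mul_of_nonneg_left ((h x (Ico_subset_Icc_self hx)).trans ?_) (by linarith)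
    exact le_add_of_nonneg_right (by positivity)

lemma one_add_rpow_add_one_sub_rpow_le_of_le {p : ℝ} (hp : 2 ≤ p)
    (h : ∀ t ∈ Icc (0 : ℝ) 1,
      (1 + t) ^ (p - 2) + (1 - t) ^ (p - 2) ≤ 2 * (1 + (p - 1) * t ^ 2) ^ ((p - 2) / 2)) :
    ∀ t ∈ Icc (0 : ℝ) 1, (1 + t) ^ p + (1 - t) ^ p ≤ 2 * (1 + (p - 1) * t ^ 2) ^ (p / 2) := by
  have hp₁ : 1 ≤ p - 1 := by linarith
  refine le_on_Icc_of_hasDerivAt_le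
    (f' := fun x => p * ((1 + x) ^ (p - 1) - (1 - x) ^ (p - 1)))
    (g' := fun x => p * (2 * (p - 1) * x * (1 + (p - 1) * x ^ 2) ^ ((p - 2) / 2)))
    (fun x => ?_) (fun x => ?_) (by norm_num) (fun x hx => ?_)
  · have hplus := ((hasDerivAt_id' x).const_add 1).rpow_const (p := p) (Or.inr (by linarith))
    have hminus := ((hasDerivAt_id' x).const_sub 1).rpow_const (p := p) (Or.inr (by linarith))
    refine (hplus.add hminus).congr_deriv ?_
    ring
  · have hB : 1 + (p - 1) * x ^ 2 ≠ 0 := by positivity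
    have := (((hasDerivAt_pow 2 x).const_mul (p - 1)).const_add 1).rpow_const
      (p := p / 2) (Or.inl hB)
    refine (this.const_mul 2).congr_deriv ?_
    rw [show p / 2 - 1 = (p - 2) / 2 by ring]
    ring
  · exact mul_le_mul_of_nonneg_left
      (one_add_rpow_sub_one_sub_rpow_le hp h x (Ico_subset_Icc_self hx)) (by linarith)

theorem one_add_rpow_add_one_sub_rpow_le {p : ℝ} (hp : 2 ≤ p) :
    ∀ t ∈ Icc (0 : ℝ) 1, (1 + t) ^ p + (1 - t) ^ p ≤ 2 * (1 + (p - 1) * t ^ 2) ^ (p / 2) := by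
  obtain ⟨n, hn⟩ := exists_nat_ge p
  induction n generalizing p with
  | zero => exact absurd hn (by norm_num; linarith)
  | succ n ih =>
    refine one_add_rpow_add_one_sub_rpow_le_of_le hp fun t ht => ?_
    rcases le_or_gt p 4 with hp₄ | hp₄
    · calc (1 + t) ^ (p - 2) + (1 - t) ^ (p - 2) ≤ 2 * (1 + t ^ 2) ^ ((p - 2) / 2) :=
            one_add_rpow_add_one_sub_rpow_le_of_le_two (by linarith) (by linarith)
              ⟨by linarith [ht.1], ht.2⟩
        _ ≤ 2 * (1 + (p - 1) * t ^ 2) ^ ((p - 2) / 2) := by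
            gcongr
            nlinarith [sq_nonneg t]
    · calc (1 + t) ^ (p - 2) + (1 - t) ^ (p - 2) ≤ 2 * (1 + (p - 2 - 1) * t ^ 2) ^ ((p - 2) / 2) :=
            ih (by linarith) (by push_cast at hn; linarith) t ht
        _ ≤ 2 * (1 + (p - 1) * t ^ 2) ^ ((p - 2) / 2) := by
            gcongr <;> nlinarith [sq_nonneg t]

lemma add_rpow_add_sub_rpow_le {p a b : ℝ} (hp : 2 ≤ p) (hb : 0 ≤ b) (hba : b ≤ a) :
    (a + b) ^ p + (a - b) ^ p ≤ 2 * (a ^ 2 + (p - 1) * b ^ 2) ^ (p / 2) := by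
  obtain rfl | ha := (hb.trans hba).eq_or_lt
  · obtain rfl : b = 0 := le_antisymm hba hb
    simp [Real.zero_rpow (by linarith : p ≠ 0), Real.zero_rpow (by linarith : p / 2 ≠ 0)]
  have ht : b / a ∈ Icc (0 : ℝ) 1 := ⟨div_nonneg hb ha.le, (div_le_one ha).2 hba⟩
  have h := mul_le_mul_of_nonneg_left (one_add_rpow_add_one_sub_rpow_le hp (b / a) ht)
    (Real.rpow_nonneg ha.le p)
  have h1 : 0 ≤ 1 - b / a := by linarith [ht.2]
  have hB : 0 ≤ 1 + (p - 1) * (b / a) ^ 2 := by nlinarith [sq_nonneg (b / a)]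
  rw [mul_add, ← Real.mul_rpow ha.le (by linarith [ht.1]), ← Real.mul_rpow ha.le h1, mul_left_comm,
    ← sq_rpow_div_two ha.le, ← Real.mul_rpow (sq_nonneg a) hB] at h
  rwa [show a * (1 + b / a) = a + b by field_simp, show a * (1 - b / a) = a - b by field_simp,
    show a ^ 2 * (1 + (p - 1) * (b / a) ^ 2) = a ^ 2 + (p - 1) * b ^ 2 by field_simp] at h

lemma norm_add_rpow_add_norm_sub_rpow_le {E : Type*} [NormedAddCommGroup E]
    [InnerProductSpace ℝ E] {p : ℝ} (hp : 2 ≤ p) (x y : E) :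
    ‖x + y‖ ^ p + ‖x - y‖ ^ p ≤ 2 * (‖x‖ ^ 2 + (p - 1) * ‖y‖ ^ 2) ^ (p / 2) := by
  wlog h : ‖x - y‖ ≤ ‖x + y‖ generalizing y with H
  · have := H (-y) (by simpa [← sub_eq_add_neg] using (not_le.1 h).le)
    simpa [← sub_eq_add_neg, add_comm] using this
  set u := ‖x + y‖
  set v := ‖x - y‖
  have hb : u - v ≤ 2 * ‖y‖ := by
    simpa [← two_smul ℝ y, norm_smul] using norm_sub_norm_le (x + y) (x - y)
  have hpar : u ^ 2 + v ^ 2 = 2 * (‖x‖ ^ 2 + ‖y‖ ^ 2) := parallelogram_law_with_norm ℝ x y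
  calc u ^ p + v ^ p
      = ((u + v) / 2 + (u - v) / 2) ^ p + ((u + v) / 2 - (u - v) / 2) ^ p := by ring_nf
    _ ≤ 2 * (((u + v) / 2) ^ 2 + (p - 1) * ((u - v) / 2) ^ 2) ^ (p / 2) :=
        add_rpow_add_sub_rpow_le hp (by linarith) (by linarith [norm_nonneg (x - y)])
    _ ≤ 2 * (‖x‖ ^ 2 + (p - 1) * ‖y‖ ^ 2) ^ (p / 2) := by
        have hsq : ((u - v) / 2) ^ 2 ≤ ‖y‖ ^ 2 := pow_le_pow_left₀ (by linarith) (by linarith) 2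
        have hp₂ : (0 : ℝ) ≤ p - 2 := by linarith
        gcongr 2 * ?_ ^ _ <;> nlinarith [mul_le_mul_of_nonneg_left hsq hp₂]

namespace MeasureTheory

variable {Ω : Type*} [MeasurableSpace Ω] {μ : Measure Ω}

theorem integral_Lp_add_le {E : Type*} [NormedAddCommGroup E] {f g : Ω → E} {r : ℝ}
    (hr : 1 ≤ r) (hf : MemLp f (ENNReal.ofReal r) μ) (hg : MemLp g (ENNReal.ofReal r) μ) :
    (∫ ω, ‖f ω + g ω‖ ^ r ∂μ) ^ (1 / r)
      ≤ (∫ ω, ‖f ω‖ ^ r ∂μ) ^ (1 / r) + (∫ ω, ‖g ω‖ ^ r ∂μ) ^ (1 / r) := by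
  have hr₀ : ENNReal.ofReal r ≠ 0 := (ENNReal.ofReal_pos.2 (by linarith)).ne'
  have h := eLpNorm_add_le hf.1 hg.1 (ENNReal.one_le_ofReal.2 hr)
  rw [(hf.add hg).eLpNorm_eq_integral_rpow_norm hr₀ ENNReal.ofReal_ne_top,
    hf.eLpNorm_eq_integral_rpow_norm hr₀ ENNReal.ofReal_ne_top,
    hg.eLpNorm_eq_integral_rpow_norm hr₀ ENNReal.ofReal_ne_top,
    ← ENNReal.ofReal_add (by positivity) (by positivity),
    ENNReal.ofReal_le_ofReal_iff (by positivity), ENNReal.toReal_ofReal (by linarith)] at h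
  simpa only [one_div, Pi.add_apply] using h

variable {E : Type*} [NormedAddCommGroup E] {p : ℝ}

lemma MemLp.integrable_norm_rpow_ofReal {X : Ω → E} (hp : 0 < p)
    (hX : MemLp X (ENNReal.ofReal p) μ) : Integrable (fun ω => ‖X ω‖ ^ p) μ := by
  simpa [ENNReal.toReal_ofReal hp.le] using
    hX.integrable_norm_rpow (by simpa using hp) ENNReal.ofReal_ne_top

lemma MemLp.norm_sq {X : Ω → E} (hp : 0 < p) (hX : MemLp X (ENNReal.ofReal p) μ) :
    MemLp (fun ω => ‖X ω‖ ^ 2) (ENNReal.ofReal (p / 2)) μ := by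
  refine (integrable_norm_rpow_iff (f := fun ω => ‖X ω‖ ^ 2) (hX.1.norm.pow 2)
    (ENNReal.ofReal_pos.2 (by linarith)).ne' ENNReal.ofReal_ne_top).1 ?_
  rw [ENNReal.toReal_ofReal (by linarith)]
  simpa [sq_rpow_div_two] using hX.integrable_norm_rpow_ofReal hp

lemma integrable_rpow_norm_sq_add {X Y : Ω → E} {c : ℝ} (hp : 0 < p) (hc : 0 ≤ c)
    (hX : MemLp X (ENNReal.ofReal p) μ) (hY : MemLp Y (ENNReal.ofReal p) μ) :
    Integrable (fun ω => (‖X ω‖ ^ 2 + c * ‖Y ω‖ ^ 2) ^ (p / 2)) μ := by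
  have h := ((hX.norm_sq hp).add ((hY.norm_sq hp).const_mul c)).integrable_norm_rpow_ofReal
    (by linarith)
  refine h.congr (ae_of_all _ fun ω => ?_)
  simp only [Pi.add_apply]
  rw [Real.norm_of_nonneg (by positivity)]

lemma integral_rpow_norm_sq_add_le {X Y : Ω → E} {c : ℝ} (hp : 2 ≤ p) (hc : 0 ≤ c)
    (hX : MemLp X (ENNReal.ofReal p) μ) (hY : MemLp Y (ENNReal.ofReal p) μ) :
    (∫ ω, (‖X ω‖ ^ 2 + c * ‖Y ω‖ ^ 2) ^ (p / 2) ∂μ) ^ (2 / p)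
      ≤ (∫ ω, ‖X ω‖ ^ p ∂μ) ^ (2 / p) + c * (∫ ω, ‖Y ω‖ ^ p ∂μ) ^ (2 / p) := by
  have hp₀ : 0 < p := by linarith
  have h := integral_Lp_add_le (r := p / 2) (by linarith) (hX.norm_sq hp₀)
    ((hY.norm_sq hp₀).const_mul c)
  have hsum : ∀ ω, ‖‖X ω‖ ^ 2 + c * ‖Y ω‖ ^ 2‖ = ‖X ω‖ ^ 2 + c * ‖Y ω‖ ^ 2 :=
    fun ω => Real.norm_of_nonneg (by positivity)
  have hYc : ∀ ω, ‖c * ‖Y ω‖ ^ 2‖ ^ (p / 2) = c ^ (p / 2) * ‖Y ω‖ ^ p := fun ω => by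
    rw [Real.norm_of_nonneg (by positivity), Real.mul_rpow hc (by positivity),
      sq_rpow_div_two (norm_nonneg _)]
  have hexp : 1 / (p / 2) = 2 / p := by field_simp
  simp only [hsum, hYc, norm_pow, norm_norm, sq_rpow_div_two (norm_nonneg _), integral_const_mul,
    hexp] at h
  rwa [Real.mul_rpow (by positivity) (integral_nonneg fun _ => by positivity),
    ← Real.rpow_mul hc, show p / 2 * (2 / p) = 1 by field_simp, Real.rpow_one] at h

end MeasureTheory

open MeasureTheory

theorem stmt11_general {Ω : Type*} [MeasurableSpace Ω] {μ : Measure Ω}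
    {d : ℕ} (p : ℝ) (hp : 2 ≤ p)
    (X Y : Ω → EuclideanSpace ℝ (Fin d))
    (hXp : MemLp X (ENNReal.ofReal p) μ) (hYp : MemLp Y (ENNReal.ofReal p) μ) :
    ((∫ ω, ‖X ω + Y ω‖ ^ p ∂μ) ^ (1 / p)) ^ 2
        + ((∫ ω, ‖X ω - Y ω‖ ^ p ∂μ) ^ (1 / p)) ^ 2
      ≤ 2 * ((∫ ω, ‖X ω‖ ^ p ∂μ) ^ (1 / p)) ^ 2
        + 2 * (p - 1) * ((∫ ω, ‖Y ω‖ ^ p ∂μ) ^ (1 / p)) ^ 2 := by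
  have hp₀ : 0 < p := by linarith
  have hadd := (hXp.add hYp).integrable_norm_rpow_ofReal (X := fun ω => X ω + Y ω) hp₀
  have hsub := (hXp.sub hYp).integrable_norm_rpow_ofReal (X := fun ω => X ω - Y ω) hp₀
  set A := ∫ ω, ‖X ω + Y ω‖ ^ p ∂μ
  set B := ∫ ω, ‖X ω - Y ω‖ ^ p ∂μ
  set G := ∫ ω, (‖X ω‖ ^ 2 + (p - 1) * ‖Y ω‖ ^ 2) ^ (p / 2) ∂μ
  have hsum : A + B ≤ 2 * G := by
    rw [← integral_add hadd hsub, ← integral_const_mul]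
    exact integral_mono (hadd.add hsub)
      ((integrable_rpow_norm_sq_add hp₀ (by linarith) hXp hYp).const_mul 2)
      fun ω => norm_add_rpow_add_norm_sub_rpow_le hp (X ω) (Y ω)
  have hA : 0 ≤ A := integral_nonneg fun ω => by positivity
  have hB : 0 ≤ B := integral_nonneg fun ω => by positivity
  have hconc := rpow_add_rpow_le_two_mul_midpoint_rpow (by positivity) ((div_le_one hp₀).2 hp) hA hB
  have hmono : ((A + B) / 2) ^ (2 / p) ≤ G ^ (2 / p) :=
    Real.rpow_le_rpow (by positivity) (by linarith) (by positivity)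
  have hmink := integral_rpow_norm_sq_add_le (c := p - 1) hp (by linarith) hXp hYp
  have hsq : ∀ W : ℝ, 0 ≤ W → (W ^ (1 / p)) ^ 2 = W ^ (2 / p) := fun W hW => by
    rw [← Real.rpow_natCast, ← Real.rpow_mul hW]
    ring_nf
  rw [hsq A hA, hsq B hB, hsq _ (integral_nonneg fun ω => by positivity),
    hsq _ (integral_nonneg fun ω => by positivity)]
  linarith

theorem stmt11 {Ω : Type*} [MeasurableSpace Ω] {μ : Measure Ω} [IsProbabilityMeasure μ]
    {d : ℕ} (p : ℝ) (hp : 2 ≤ p)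
    (X Y : Ω → EuclideanSpace ℝ (Fin d))
    (hXp : MemLp X (ENNReal.ofReal p) μ) (hYp : MemLp Y (ENNReal.ofReal p) μ) :
    ((∫ ω, ‖X ω + Y ω‖ ^ p ∂μ) ^ (1 / p)) ^ 2
        + ((∫ ω, ‖X ω - Y ω‖ ^ p ∂μ) ^ (1 / p)) ^ 2
      ≤ 2 * ((∫ ω, ‖X ω‖ ^ p ∂μ) ^ (1 / p)) ^ 2
        + 2 * (p - 1) * ((∫ ω, ‖Y ω‖ ^ p ∂μ) ^ (1 / p)) ^ 2 :=
  stmt11_general p hp X Y hXp hYp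
end

section
/- Let $g : [0,1] \to (0, \infty)$ be defined by $g(t) = (\sigma^2 - 1)t + 1$ for a constant $\sigma > 0$, and let $0 < t_0 < t_1 < \cdots < t_N = 1$ with $h_i = t_{i+1} - t_i$. Suppose $(\mu_i)_{i=0}^N \subset \mathbb{R}^d$ satisfies $\mu_{i+1} = \frac{g(t_{i+1})}{g(t_i)} \mu_i + \frac{h_i}{g(t_i)} \mu$ for a fixed $\mu \in \mathbb{R}^d$, with $\mu_0 = t_0 \hat{\mu}$ for some $\hat{\mu} \in \mathbb{R}^d$. Then $\mu_N - \mu = \frac{\sigma^2 t_0}{g(t_0)}(\hat{\mu} - \mu)$. -/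
/-!
Since `g` is affine with `g 0 = 1`, one has `t' / g t' - t / g t = (t' - t) / (g t * g t')`, and
this makes `(g tᵢ)⁻¹ • (μᵢ - tᵢ • μ)` invariant under the recursion. Comparing its values at
`i = N` (where `g 1 = σ²`) and at `i = 0` gives the formula.
-/

open Set

section AffineRecursion

variable {K E : Type*} [Field K] [AddCommGroup E] [Module K E]

lemma inv_smul_sub_smul_eq_of_affine_step {a : K} {g : K → K} (hg : ∀ u, g u = a * u + 1)
    {s s' : K} (hs : g s ≠ 0) (hs' : g s' ≠ 0) {x x' m : E}
    (hx' : x' = (g s' / g s) • x + ((s' - s) / g s) • m) :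
    (g s')⁻¹ • (x' - s' • m) = (g s)⁻¹ • (x - s • m) := by
  subst hx'
  simp only [hg] at hs hs' ⊢
  match_scalars
  · field_simp
  · field_simp
    ring

lemma inv_smul_sub_smul_eq_of_affine_recursion {a : K} {g : K → K} (hg : ∀ u, g u = a * u + 1)
    {N : ℕ} {t : ℕ → K} (ht : ∀ i ≤ N, g (t i) ≠ 0) {x : ℕ → E} {m : E}
    (hrec : ∀ i < N,
      x (i + 1) = (g (t (i + 1)) / g (t i)) • x i + ((t (i + 1) - t i) / g (t i)) • m) :
    ∀ i ≤ N, (g (t i))⁻¹ • (x i - t i • m) = (g (t 0))⁻¹ • (x 0 - t 0 • m) := by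
  intro i hi
  induction i with
  | zero => rfl
  | succ i ih =>
    rw [inv_smul_sub_smul_eq_of_affine_step hg (ht i (by omega)) (ht (i + 1) hi) (hrec i hi),
      ih (by omega)]

end AffineRecursion

lemma mul_add_one_pos_of_mem_Icc {a u : ℝ} (ha : 0 < a + 1) (hu : u ∈ Icc 0 1) :
    0 < a * u + 1 := by
  obtain ⟨hu0, hu1⟩ := hu
  rcases hu1.lt_or_eq with hu1 | rfl
  · nlinarith
  · linarith

theorem stmt12_general {d : ℕ} (σ : ℝ) (hσ : 0 < σ) (N : ℕ)
    (t : ℕ → ℝ) (ht0 : 0 < t 0) (hmono : ∀ i < N, t i < t (i + 1)) (htN : t N = 1)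
    (μ μhat : EuclideanSpace ℝ (Fin d)) (μseq : ℕ → EuclideanSpace ℝ (Fin d))
    (g : ℝ → ℝ) (hg : ∀ u, g u = (σ ^ 2 - 1) * u + 1)
    (h0 : μseq 0 = t 0 • μhat)
    (hrec : ∀ i < N, μseq (i + 1)
      = (g (t (i + 1)) / g (t i)) • μseq i + ((t (i + 1) - t i) / g (t i)) • μ) :
    μseq N - μ = (σ ^ 2 * t 0 / g (t 0)) • (μhat - μ) := by
  have ht_mono : MonotoneOn t (Iic N) :=
    (strictMonoOn_Iic_of_lt_succ (by simpa only [Order.succ_eq_add_one] using hmono)).monotoneOn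
  have hg_pos : ∀ i ≤ N, 0 < g (t i) := fun i hi => by
    rw [hg]
    refine mul_add_one_pos_of_mem_Icc (by nlinarith) ⟨ht0.le.trans ?_, htN ▸ ?_⟩
    · exact ht_mono (mem_Iic.2 (Nat.zero_le N)) (mem_Iic.2 hi) (Nat.zero_le i)
    · exact ht_mono (mem_Iic.2 hi) (mem_Iic.2 le_rfl) hi
  have hg_one : g 1 = σ ^ 2 := by rw [hg]; ring
  have hinv :=
    inv_smul_sub_smul_eq_of_affine_recursion hg (fun i hi => (hg_pos i hi).ne') hrec N le_rfl
  rw [htN, one_smul, hg_one, h0, ← smul_sub, inv_smul_eq_iff₀ (by positivity)] at hinv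
  rw [hinv, smul_smul, smul_smul]
  congr 1
  ring

theorem stmt12 {d : ℕ} (σ : ℝ) (hσ : 0 < σ) (N : ℕ) (hN : 1 ≤ N)
    (t : ℕ → ℝ) (ht0 : 0 < t 0) (hmono : ∀ i < N, t i < t (i + 1)) (htN : t N = 1)
    (μ μhat : EuclideanSpace ℝ (Fin d)) (μseq : ℕ → EuclideanSpace ℝ (Fin d))
    (g : ℝ → ℝ) (hg : ∀ u, g u = (σ ^ 2 - 1) * u + 1)
    (h0 : μseq 0 = t 0 • μhat)
    (hrec : ∀ i < N, μseq (i + 1)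
      = (g (t (i + 1)) / g (t i)) • μseq i + ((t (i + 1) - t i) / g (t i)) • μ) :
    μseq N - μ = (σ ^ 2 * t 0 / g (t 0)) • (μhat - μ) :=
  stmt12_general σ hσ N t ht0 hmono htN μ μhat μseq g hg h0 hrec
end

section
/- Let $0 < t_0 < t_1 < \cdots < t_N < 1$ with $h_i = t_{i+1} - t_i$, and suppose there is $\eta > 0$ with $h_i \leq \eta \sqrt{1 - t_{i+1}}$ for all $i$. Let $(a_i)_{i=0}^N$ be a nondecreasing sequence of nonnegative reals such that $a_i \leq \frac{A}{1-t_i} + B$ for all $i$, where $A, B \geq 0$. Then $\sum_{i=0}^{N-1} h_i^2 (a_{i+1} - a_i) \leq \eta^2 \left( A \sum_{i=1}^{N-1} \frac{h_i}{1-t_i} + A + B \right)$. -/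
/-!
Squaring the step condition gives `h_i² ≤ η² (1 - t_{i+1})`, so it suffices to bound
`∑ (1 - t_{i+1}) (a_{i+1} - a_i)`. Abel summation turns this into `∑ h_i a_i + (1 - t_N) a_N`
(up to a nonpositive term at `i = 0`), and the bound `a_i ≤ A / (1 - t_i) + B` estimates each
piece; the `B`-terms add up to at most `B (1 - t_0) ≤ B` by telescoping.
-/

open Finset

theorem sq_le_mul_of_le_mul_sqrt {x c y : ℝ} (hx : 0 ≤ x) (hy : 0 ≤ y) (h : x ≤ c * √y) :
    x ^ 2 ≤ c ^ 2 * y :=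
  calc x ^ 2 ≤ (c * √y) ^ 2 := pow_le_pow_left₀ hx h 2
    _ = c ^ 2 * y := by rw [mul_pow, Real.sq_sqrt hy]

theorem sum_range_succ_mul_sub_add_eq (s a : ℕ → ℝ) (n : ℕ) :
    ∑ i ∈ range (n + 1), s (i + 1) * (a (i + 1) - a i) + s 1 * a 0
      = ∑ i ∈ Ico 1 (n + 1), (s i - s (i + 1)) * a i + s (n + 1) * a (n + 1) := by
  induction n with
  | zero => simp only [zero_add, sum_range_one, Ico_self, sum_empty]; ring
  | succ n ih =>
    rw [sum_range_succ, sum_Ico_succ_top (by omega)]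
    linear_combination ih

theorem sum_range_mul_sub_le (s a : ℕ → ℝ) (N : ℕ) (hs : ∀ i ≤ N, 0 ≤ s i) (ha : 0 ≤ a 0) :
    ∑ i ∈ range N, s (i + 1) * (a (i + 1) - a i)
      ≤ ∑ i ∈ Ico 1 N, (s i - s (i + 1)) * a i + s N * a N := by
  cases N with
  | zero => simpa using mul_nonneg (hs 0 le_rfl) ha
  | succ n =>
    have := sum_range_succ_mul_sub_add_eq s a n
    linarith [mul_nonneg (hs 1 (by omega)) ha]

theorem sum_Ico_mul_add_le (N : ℕ) (t a : ℕ → ℝ) (A B : ℝ) (hB : 0 ≤ B) (ht0 : 0 ≤ t 0)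
    (hmono : ∀ i < N, t i ≤ t (i + 1)) (htN : t N < 1)
    (hab : ∀ i ≤ N, a i ≤ A / (1 - t i) + B) :
    ∑ i ∈ Ico 1 N, (t (i + 1) - t i) * a i + (1 - t N) * a N
      ≤ A * ∑ i ∈ Ico 1 N, (t (i + 1) - t i) / (1 - t i) + A + B := by
  have hsum : ∑ i ∈ Ico 1 N, (t (i + 1) - t i) * a i
      ≤ ∑ i ∈ Ico 1 N, (A * ((t (i + 1) - t i) / (1 - t i)) + B * (t (i + 1) - t i)) := by
    refine sum_le_sum fun i hi ↦ ?_
    have hiN := (mem_Ico.mp hi).2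
    calc (t (i + 1) - t i) * a i ≤ (t (i + 1) - t i) * (A / (1 - t i) + B) :=
          mul_le_mul_of_nonneg_left (hab i hiN.le) (sub_nonneg.mpr (hmono i hiN))
      _ = A * ((t (i + 1) - t i) / (1 - t i)) + B * (t (i + 1) - t i) := by ring
  have hlast : (1 - t N) * a N ≤ A + B * (1 - t N) := by
    have hpos : 0 < 1 - t N := sub_pos.mpr htN
    calc (1 - t N) * a N ≤ (1 - t N) * (A / (1 - t N) + B) :=
          mul_le_mul_of_nonneg_left (hab N le_rfl) hpos.le
      _ = A + B * (1 - t N) := by field_simp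
  have hincr : ∑ i ∈ Ico 1 N, (t (i + 1) - t i) ≤ t N - t 0 := by
    rw [← sum_range_sub, range_eq_Ico]
    exact sum_le_sum_of_subset_of_nonneg (Ico_subset_Ico_left zero_le_one)
      fun i hi _ ↦ sub_nonneg.mpr (hmono i (mem_Ico.mp hi).2)
  rw [sum_add_distrib, ← mul_sum, ← mul_sum] at hsum
  linarith [mul_le_mul_of_nonneg_left hincr hB, mul_nonneg hB ht0]

theorem stmt18_general (N : ℕ) (t : ℕ → ℝ) (η A B : ℝ) (hB : 0 ≤ B)
    (ht0 : 0 < t 0) (hmono : ∀ i < N, t i < t (i + 1)) (htN : t N < 1)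
    (hstep : ∀ i < N, t (i + 1) - t i ≤ η * Real.sqrt (1 - t (i + 1)))
    (a : ℕ → ℝ) (ha0 : ∀ i ≤ N, 0 ≤ a i) (hamono : ∀ i < N, a i ≤ a (i + 1))
    (hab : ∀ i ≤ N, a i ≤ A / (1 - t i) + B) :
    ∑ i ∈ Finset.range N, (t (i + 1) - t i) ^ 2 * (a (i + 1) - a i)
      ≤ η ^ 2 * (A * ∑ i ∈ Finset.Ico 1 N, (t (i + 1) - t i) / (1 - t i) + A + B) := by
  have hmonoOn : MonotoneOn t (Set.Iic N) :=
    monotoneOn_of_le_add_one Set.ordConnected_Iic fun i _ _ hi ↦ (hmono i hi).le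
  have hgap : ∀ i ≤ N, 0 ≤ 1 - t i := fun i hi ↦
    sub_nonneg.mpr ((hmonoOn hi Set.self_mem_Iic hi).trans htN.le)
  have habel := sum_range_mul_sub_le (fun i ↦ 1 - t i) a N hgap (ha0 0 N.zero_le)
  simp only [sub_sub_sub_cancel_left] at habel
  calc ∑ i ∈ range N, (t (i + 1) - t i) ^ 2 * (a (i + 1) - a i)
      ≤ ∑ i ∈ range N, η ^ 2 * (1 - t (i + 1)) * (a (i + 1) - a i) := by
        refine sum_le_sum fun i hi ↦ ?_
        have hiN := mem_range.mp hi
        exact mul_le_mul_of_nonneg_right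
          (sq_le_mul_of_le_mul_sqrt (sub_nonneg.mpr (hmono i hiN).le) (hgap _ hiN) (hstep i hiN))
          (sub_nonneg.mpr (hamono i hiN))
    _ ≤ η ^ 2 * (∑ i ∈ Ico 1 N, (t (i + 1) - t i) * a i + (1 - t N) * a N) := by
        simp only [mul_assoc, ← mul_sum]
        exact mul_le_mul_of_nonneg_left habel (sq_nonneg η)
    _ ≤ η ^ 2 * (A * ∑ i ∈ Ico 1 N, (t (i + 1) - t i) / (1 - t i) + A + B) :=
        mul_le_mul_of_nonneg_left
          (sum_Ico_mul_add_le N t a A B hB ht0.le (fun i hi ↦ (hmono i hi).le) htN hab)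
          (sq_nonneg η)

theorem stmt18 (N : ℕ) (t : ℕ → ℝ) (η A B : ℝ) (hη : 0 < η) (hA : 0 ≤ A) (hB : 0 ≤ B)
    (ht0 : 0 < t 0) (hmono : ∀ i < N, t i < t (i + 1)) (htN : t N < 1)
    (hstep : ∀ i < N, t (i + 1) - t i ≤ η * Real.sqrt (1 - t (i + 1)))
    (a : ℕ → ℝ) (ha0 : ∀ i ≤ N, 0 ≤ a i) (hamono : ∀ i < N, a i ≤ a (i + 1))
    (hab : ∀ i ≤ N, a i ≤ A / (1 - t i) + B) :
    ∑ i ∈ Finset.range N, (t (i + 1) - t i) ^ 2 * (a (i + 1) - a i)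
      ≤ η ^ 2 * (A * ∑ i ∈ Finset.Ico 1 N, (t (i + 1) - t i) / (1 - t i) + A + B) :=
  stmt18_general N t η A B hB ht0 hmono htN hstep a ha0 hamono hab
end
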